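/- The eBH discovery set is contained in the closed eBH discovery set: if R^eBH is the largest self-consistent set of hypotheses with the largest e-values, and R^{c-eBH} is the set R_k of the k largest e-values for the largest k such that R_k ∈ C̄, then R^eBH ⊆ R^{c-eBH}. -/

import Mathlib

open Finset
open scoped Classical

/-- The false discovery proportion `FDP_A(R) = |A ∩ R| / max(|R|, 1)`. -/
noncomputable def FDP {K : ℕ} (A R : Finset (Fin K)) : ℝ :=
  ((A ∩ R).card : ℝ) / max (R.card : ℝ) 1

/-- `k^eBH`: the largest `k ≤ K` such that at least `k` e-values are `≥ K/(αk)`. -/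
noncomputable def kEBH (K : ℕ) (α : ℝ) (E : Fin K → ℝ) : ℕ :=
  sSup {k | k ≤ K ∧ k ≤ (univ.filter (fun i => E i ≥ (K : ℝ) / (α * k))).card}

/-- The eBH discovery set `R^eBH = {i : E_i ≥ K/(α k^eBH)}` (empty if `k^eBH = 0`). -/
noncomputable def ReBH (K : ℕ) (α : ℝ) (E : Fin K → ℝ) : Finset (Fin K) :=
  if kEBH K α E = 0 then ∅
  else univ.filter (fun i => E i ≥ (K : ℝ) / (α * kEBH K α E))

/-- `R_k`: the indices of the `k` largest e-values, given a sorting permutation `σ`. -/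
noncomputable def Rk {K : ℕ} (σ : Fin K ≃ Fin K) (k : ℕ) : Finset (Fin K) :=
  (univ.filter (fun i : Fin K => (i : ℕ) < k)).image σ

/-- Membership in the closed candidate set `C̄`: for every nonempty `A`,
the arithmetic mean e-value `E_A` satisfies `E_A ≥ FDP_A(R)/α`. -/
def Cbar {K : ℕ} (α : ℝ) (E : Fin K → ℝ) (R : Finset (Fin K)) : Prop :=
  ∀ A : Finset (Fin K), A.Nonempty → (∑ i ∈ A, E i) / (A.card : ℝ) ≥ FDP A R / α

/-- `k̄`: the largest `k ≤ K` with `R_k ∈ C̄`; `R^{c-eBH} = R_k̄`. -/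
noncomputable def kCbar (K : ℕ) (α : ℝ) (E : Fin K → ℝ) (σ : Fin K ≃ Fin K) : ℕ :=
  sSup {k | k ≤ K ∧ Cbar α E (Rk σ k)}

/-!
Because `σ` sorts the e-values, the eBH rejection set `R = {i : E_i ≥ K/(α k^eBH)}` is a prefix
`R_m` with `m = |R| ≥ k^eBH`. Every e-value in `R` is then at least `K/(α m)`, so for any nonempty
`A`, using `|A| ≤ K`, the sum of the e-values over `A` is at least
`|A ∩ R| K/(α m) ≥ |A| FDP_A(R)/α`. Hence `R_m ∈ C̄`, so `m ≤ k̄` and `R = R_m ⊆ R_k̄`.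
-/

theorem Fin.eq_filter_lt_card_of_isLowerSet {K : ℕ} {D : Finset (Fin K)}
    (hD : IsLowerSet (D : Set (Fin K))) :
    D = univ.filter (fun i : Fin K => (i : ℕ) < D.card) := by
  ext j
  simp only [mem_filter, mem_univ, true_and]
  constructor
  · intro hj
    have : Iic j ⊆ D := fun i hi => hD (mem_Iic.mp hi) hj
    simpa [Fin.card_Iic] using card_le_card this
  · intro hj
    by_contra hjD
    have : D ⊆ Iio j := fun i hi => mem_Iio.mpr (lt_of_not_ge fun hji => hjD (hD hji hi))
    have := card_le_card this
    rw [Fin.card_Iio] at this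
    omega

theorem Rk_mono {K : ℕ} (σ : Fin K ≃ Fin K) {k l : ℕ} (hkl : k ≤ l) : Rk σ k ⊆ Rk σ l :=
  image_subset_image fun i hi => by
    simp only [mem_filter, mem_univ, true_and] at hi ⊢
    omega

theorem filter_le_eq_Rk {K : ℕ} {β : Type*} [LinearOrder β] {E : Fin K → β} {σ : Fin K ≃ Fin K}
    (hσ : Antitone (E ∘ σ)) (t : β) :
    univ.filter (fun i => t ≤ E i) = Rk σ (univ.filter (fun i => t ≤ E i)).card := by
  set D := univ.filter (fun j => t ≤ E (σ j))
  have hD : IsLowerSet (D : Set (Fin K)) := fun i j hji hj => by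
    simp only [D, coe_filter, mem_univ, true_and, Set.mem_ofPred_eq] at hj ⊢
    exact hj.trans (hσ hji)
  have hσD : D.image σ = univ.filter (fun i => t ≤ E i) := by
    ext i
    simp only [D, mem_image, mem_filter, mem_univ, true_and]
    exact ⟨fun ⟨j, hj, hji⟩ => hji ▸ hj, fun hi => ⟨σ.symm i, by simpa using hi, by simp⟩⟩
  rw [← hσD, card_image_of_injective _ σ.injective, Rk, ← Fin.eq_filter_lt_card_of_isLowerSet hD]

theorem FDP_eq_div_card {K : ℕ} (A R : Finset (Fin K)) :
    FDP A R = ((A ∩ R).card : ℝ) / R.card := by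
  rcases R.eq_empty_or_nonempty with rfl | hR
  · simp [FDP]
  · rw [FDP, max_eq_left (by exact_mod_cast hR.card_pos)]

theorem Cbar_of_forall_mem_le {K : ℕ} {α : ℝ} (hα : 0 < α) {E : Fin K → ℝ} (hE : ∀ i, 0 ≤ E i)
    {R : Finset (Fin K)} (hR : ∀ i ∈ R, (K : ℝ) / (α * R.card) ≤ E i) : Cbar α E R := by
  intro A hA
  have hAK : (A.card : ℝ) ≤ K := by exact_mod_cast (card_le_univ A).trans_eq (Fintype.card_fin K)
  rw [FDP_eq_div_card, ge_iff_le, le_div_iff₀ (by exact_mod_cast hA.card_pos)]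
  calc ((A ∩ R).card : ℝ) / R.card / α * A.card
      ≤ ((A ∩ R).card : ℝ) / R.card / α * K := by gcongr
    _ = (A ∩ R).card * ((K : ℝ) / (α * R.card)) := by ring
    _ ≤ ∑ i ∈ A ∩ R, E i := by
        rw [← nsmul_eq_mul]
        exact card_nsmul_le_sum _ _ _ fun i hi => hR i (mem_inter.mp hi).2
    _ ≤ ∑ i ∈ A, E i := sum_le_sum_of_subset_of_nonneg inter_subset_left fun i _ _ => hE i

theorem kEBH_le_card (K : ℕ) (α : ℝ) (E : Fin K → ℝ) :
    kEBH K α E ≤ (univ.filter (fun i => E i ≥ (K : ℝ) / (α * kEBH K α E))).card :=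
  (Nat.sSup_mem ⟨0, by simp⟩ ⟨K, fun _ hk => hk.1⟩ :
    kEBH K α E ∈ {k | k ≤ K ∧ k ≤ (univ.filter (fun i => E i ≥ (K : ℝ) / (α * k))).card}).2

theorem le_kCbar {K : ℕ} {α : ℝ} {E : Fin K → ℝ} {σ : Fin K ≃ Fin K} {k : ℕ} (hk : k ≤ K)
    (hC : Cbar α E (Rk σ k)) : k ≤ kCbar K α E σ :=
  le_csSup ⟨K, fun _ hk => hk.1⟩ ⟨hk, hC⟩

theorem stmt2_general (K : ℕ) (α : ℝ) (hα : 0 < α)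
    (E : Fin K → ℝ) (hE : ∀ i, 0 ≤ E i) (σ : Fin K ≃ Fin K)
    (hσ : ∀ i j : Fin K, i ≤ j → E (σ j) ≤ E (σ i)) :
    ReBH K α E ⊆ Rk σ (kCbar K α E σ) := by
  rw [ReBH]
  split_ifs with hk0
  · exact empty_subset _
  set k := kEBH K α E
  set R := univ.filter (fun i => E i ≥ (K : ℝ) / (α * k))
  have hkR : k ≤ R.card := kEBH_le_card K α E
  have hR : R = Rk σ R.card := filter_le_eq_Rk (fun i j h => hσ i j h) _
  -- R has at least k elements, so its own threshold K / (α |R|) is no higher than K / (α k).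
  have hC : Cbar α E R := Cbar_of_forall_mem_le hα hE fun i hi =>
    le_trans (by gcongr) (mem_filter.mp hi).2
  calc R = Rk σ R.card := hR
    _ ⊆ Rk σ (kCbar K α E σ) :=
      Rk_mono σ (le_kCbar ((card_le_univ R).trans_eq (Fintype.card_fin K)) (hR ▸ hC))

/-- the eBH discovery set is contained in the closed eBH discovery set. -/
theorem stmt2 (K : ℕ) (hK : 0 < K) (α : ℝ) (hα : 0 < α) (hα1 : α ≤ 1)
    (E : Fin K → ℝ) (hE : ∀ i, 0 ≤ E i) (σ : Fin K ≃ Fin K)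
    (hσ : ∀ i j : Fin K, i ≤ j → E (σ j) ≤ E (σ i)) :
    ReBH K α E ⊆ Rk σ (kCbar K α E σ) :=
  stmt2_general K α hα E hE σ hσ
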